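/- arXiv:2004.14713 — 2 statements merged into one kernel-verified Lean document; each statement's English description precedes it below -/
import Mathlib

section
/- Among translates of the closed unit ball B ⊂ ℝⁿ, the integral of ‖x‖^{−β} (for β ∈ (0, n)) is maximized exactly at the centered ball: for all y ∈ ℝⁿ, ∫_{B+y} ‖x‖^{−β} dx ≤ ∫_B ‖x‖^{−β} dx with equality iff y = 0. -/
open MeasureTheory Metric Set
open scoped ENNReal

private lemma ball_rpow_finite (n : ℕ) {β : ℝ} (hβ0 : 0 < β) (hβn : β < n) :
    (∫⁻ x in Metric.closedBall (0 : EuclideanSpace ℝ (Fin n)) 1,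
      ENNReal.ofReal (‖x‖ ^ (-β))) < ∞ := by
  have h_meas : Measurable fun x : EuclideanSpace ℝ (Fin n) => ‖x‖ ^ (-β) := by fun_prop
  rw [lintegral_eq_lintegral_meas_le _
    (Filter.Eventually.of_forall fun x => Real.rpow_nonneg (norm_nonneg x) _)
    h_meas.aemeasurable]
  set μr := (volume : Measure (EuclideanSpace ℝ (Fin n))).restrict (Metric.closedBall 0 1)
  have key : ∀ t : ℝ, 0 < t →
      μr {a | t ≤ ‖a‖ ^ (-β)} ≤
        volume (Metric.closedBall (0 : EuclideanSpace ℝ (Fin n)) (t ^ (-β⁻¹))) := by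
    intro t ht
    refine le_trans (Measure.restrict_apply_le _ _) (measure_mono fun a ha => ?_)
    simp only [Set.mem_setOf_eq] at ha
    have ha0 : a ≠ 0 := by
      rintro rfl
      rw [norm_zero, Real.zero_rpow (neg_ne_zero.mpr hβ0.ne')] at ha
      exact absurd (ht.trans_le ha) (lt_irrefl _)
    have hna : 0 < ‖a‖ := norm_pos_iff.mpr ha0
    rw [mem_closedBall_zero_iff]
    have := Real.rpow_le_rpow_of_nonpos ht ha (neg_nonpos.mpr (inv_nonneg.mpr hβ0.le))
    calc ‖a‖ = (‖a‖ ^ (-β)) ^ (-β⁻¹) := by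
          rw [← Real.rpow_mul (norm_nonneg a), neg_mul_neg, mul_inv_cancel₀ hβ0.ne',
            Real.rpow_one]
      _ ≤ t ^ (-β⁻¹) := this
  calc ∫⁻ t in Ioi (0:ℝ), μr {a | t ≤ ‖a‖ ^ (-β)}
      ≤ ∫⁻ t in Ioc (0:ℝ) 1 ∪ Ioi 1, μr {a | t ≤ ‖a‖ ^ (-β)} :=
        lintegral_mono_set Ioi_subset_Ioc_union_Ioi
    _ ≤ (∫⁻ t in Ioc (0:ℝ) 1, μr {a | t ≤ ‖a‖ ^ (-β)}) +
          ∫⁻ t in Ioi (1:ℝ), μr {a | t ≤ ‖a‖ ^ (-β)} := lintegral_union_le _ _ _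
    _ < ∞ := by
        refine ENNReal.add_lt_top.2 ⟨?_, ?_⟩
        · calc (∫⁻ t in Ioc (0:ℝ) 1, μr {a | t ≤ ‖a‖ ^ (-β)})
              ≤ ∫⁻ _ in Ioc (0:ℝ) 1,
                  volume (Metric.closedBall (0 : EuclideanSpace ℝ (Fin n)) 1) :=
                setLIntegral_mono' measurableSet_Ioc fun t _ =>
                  (measure_mono (Set.subset_univ _)).trans
                    (le_of_eq (Measure.restrict_apply_univ _))
            _ = volume (Metric.closedBall (0 : EuclideanSpace ℝ (Fin n)) 1) *
                  volume (Ioc (0:ℝ) 1) := setLIntegral_const _ _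
            _ < ∞ := ENNReal.mul_lt_top measure_closedBall_lt_top
                (by rw [Real.volume_Ioc]; exact ENNReal.ofReal_lt_top)
        · have hexp : -(β⁻¹ * (n:ℝ)) < -1 := by
            rw [neg_lt_neg_iff, inv_mul_eq_div]
            exact (one_lt_div hβ0).mpr hβn
          calc (∫⁻ t in Ioi (1:ℝ), μr {a | t ≤ ‖a‖ ^ (-β)})
              ≤ ∫⁻ t in Ioi (1:ℝ), ENNReal.ofReal (t ^ (-(β⁻¹ * (n:ℝ)))) *
                  volume (Metric.ball (0 : EuclideanSpace ℝ (Fin n)) 1) := by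
                refine setLIntegral_mono' measurableSet_Ioi fun t ht => ?_
                have ht0 : (0:ℝ) < t := lt_trans one_pos ht
                refine le_trans (key t ht0) ?_
                rw [Measure.addHaar_closedBall _ _ (Real.rpow_nonneg ht0.le _)]
                gcongr
                rw [← Real.rpow_natCast (t ^ (-β⁻¹)), ← Real.rpow_mul ht0.le,
                  finrank_euclideanSpace_fin, neg_mul]
            _ < ∞ := by
                rw [lintegral_mul_const' _ _ measure_ball_lt_top.ne]
                exact ENNReal.mul_lt_top
                  ((integrableOn_Ioi_rpow_of_lt hexp one_pos).setLIntegral_lt_top)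
                  measure_ball_lt_top

/-- Among translates of the closed unit ball `B ⊂ ℝⁿ`, the integral of
`‖x‖^{−β}` (for `β ∈ (0, n)`) is maximized exactly at the centered ball:
for every `y`, `∫_{B+y} ‖x‖^{−β} dx ≤ ∫_B ‖x‖^{−β} dx`, with equality iff `y = 0`. -/
theorem translated_ball_integral_le_iff (n : ℕ) (hn : 1 ≤ n)
    (β : ℝ) (hβ : β ∈ Set.Ioo (0 : ℝ) (n : ℝ)) (y : EuclideanSpace ℝ (Fin n)) :
    (∫⁻ x in Metric.closedBall y 1, ENNReal.ofReal (‖x‖ ^ (-β))) ≤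
      (∫⁻ x in Metric.closedBall (0 : EuclideanSpace ℝ (Fin n)) 1,
        ENNReal.ofReal (‖x‖ ^ (-β))) ∧
    ((∫⁻ x in Metric.closedBall y 1, ENNReal.ofReal (‖x‖ ^ (-β))) =
      (∫⁻ x in Metric.closedBall (0 : EuclideanSpace ℝ (Fin n)) 1,
        ENNReal.ofReal (‖x‖ ^ (-β))) ↔ y = 0) := by
  obtain ⟨hβ0, hβn⟩ := hβ
  by_cases hy : y = 0
  · subst hy; exact ⟨le_rfl, by simp⟩
  set f : EuclideanSpace ℝ (Fin n) → ENNReal := fun x => ENNReal.ofReal (‖x‖ ^ (-β)) with hfdef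
  set B0 := Metric.closedBall (0 : EuclideanSpace ℝ (Fin n)) 1 with hB0def
  set By := Metric.closedBall y 1 with hBydef
  have hB0m : MeasurableSet B0 := measurableSet_closedBall
  have hBym : MeasurableSet By := measurableSet_closedBall
  have hfin0 : (∫⁻ x in B0, f x) ≠ ∞ := (ball_rpow_finite n hβ0 hβn).ne
  -- equal volumes of the two balls
  have hvol : volume By = volume B0 := by
    rw [hBydef, hB0def, Measure.addHaar_closedBall _ _ zero_le_one,
      Measure.addHaar_closedBall _ _ zero_le_one]
  -- equal volumes of the two differences
  have hAfin : volume (By ∩ B0) ≠ ∞ :=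
    ((measure_mono Set.inter_subset_right).trans_lt measure_closedBall_lt_top).ne
  have hdiffvol : volume (By \ B0) = volume (B0 \ By) := by
    have h1 : volume (By \ B0) + volume (By ∩ B0) = volume By :=
      measure_diff_add_inter _ hB0m
    have h2 : volume (B0 \ By) + volume (B0 ∩ By) = volume B0 :=
      measure_diff_add_inter _ hBym
    rw [Set.inter_comm] at h2
    have := h1.trans (hvol.trans h2.symm)
    exact WithTop.add_right_cancel hAfin this
  -- the difference By \ B0 has positive measure
  have hnormy : 0 < ‖y‖ := norm_pos_iff.mpr hy
  have hpos : volume (By \ B0) ≠ 0 := by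
    set t : ℝ := 1 - min ‖y‖ 1 / 2 with htdef
    have hmin : 0 < min ‖y‖ 1 := lt_min hnormy one_pos
    have ht0 : 0 < t := by
      have : min ‖y‖ 1 ≤ 1 := min_le_right _ _
      simp only [htdef]; linarith
    have ht1 : t < 1 := by simp only [htdef]; linarith
    set z : EuclideanSpace ℝ (Fin n) := (1 + t / ‖y‖) • y with hzdef
    have hzy : ‖z - y‖ < 1 := by
      have : z - y = (t / ‖y‖) • y := by
        rw [hzdef, add_smul, one_smul, add_sub_cancel_left]
      rw [this, norm_smul, Real.norm_eq_abs, abs_of_pos (by positivity),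
        div_mul_cancel₀ _ hnormy.ne']
      exact ht1
    have hz1 : 1 < ‖z‖ := by
      rw [hzdef, norm_smul, Real.norm_eq_abs, abs_of_pos (by positivity),
        add_mul, one_mul, div_mul_cancel₀ _ hnormy.ne']
      have : min ‖y‖ 1 ≤ ‖y‖ := min_le_left _ _
      simp only [htdef]; linarith
    have hU : IsOpen (Metric.ball y 1 ∩ B0ᶜ) :=
      Metric.isOpen_ball.inter (Metric.isClosed_closedBall.isOpen_compl)
    have hzU : z ∈ Metric.ball y 1 ∩ B0ᶜ := by
      constructor
      · rwa [Metric.mem_ball, dist_eq_norm]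
      · simp only [hB0def, Set.mem_compl_iff, Metric.mem_closedBall,
          dist_zero_right, not_le]
        exact hz1
    have hUpos : 0 < volume (Metric.ball y 1 ∩ B0ᶜ) :=
      hU.measure_pos volume ⟨z, hzU⟩
    have hsub : Metric.ball y 1 ∩ B0ᶜ ⊆ By \ B0 := fun x hx =>
      ⟨Metric.ball_subset_closedBall hx.1, hx.2⟩
    exact (hUpos.trans_le (measure_mono hsub)).ne'
  haveI : Nontrivial (EuclideanSpace ℝ (Fin n)) := by
    apply Module.nontrivial_of_finrank_pos (R := ℝ)
    rw [finrank_euclideanSpace_fin]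
    omega
  -- strict inequality on By \ B0
  have hByfin : volume By < ⊤ := measure_closedBall_lt_top
  have hfinS1 : (∫⁻ x in By \ B0, f x) ≠ ⊤ := by
    refine ne_of_lt ?_
    calc (∫⁻ x in By \ B0, f x) ≤ ∫⁻ _ in By \ B0, 1 := by
          refine setLIntegral_mono' (hBym.diff hB0m) fun x hx => ?_
          have hx1 : 1 ≤ ‖x‖ := by
            have h2 := hx.2
            simp only [hB0def, Metric.mem_closedBall, dist_zero_right, not_le] at h2
            exact h2.le
          calc f x ≤ ENNReal.ofReal 1 :=
                ENNReal.ofReal_le_ofReal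
                  (Real.rpow_le_one_of_one_le_of_nonpos hx1 (by linarith))
            _ = 1 := ENNReal.ofReal_one
      _ = volume (By \ B0) := setLIntegral_one _
      _ ≤ volume By := measure_mono Set.diff_subset
      _ < ⊤ := hByfin
  have hS1 : (∫⁻ x in By \ B0, f x) < volume (By \ B0) := by
    have hlt : ∀ᵐ x ∂(volume : Measure (EuclideanSpace ℝ (Fin n))),
        x ∈ By \ B0 → f x < 1 := by
      refine Filter.Eventually.of_forall fun x hx => ?_
      have hx1 : 1 < ‖x‖ := by
        have h2 := hx.2
        simp only [hB0def, Metric.mem_closedBall, dist_zero_right, not_le] at h2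
        exact h2
      exact ENNReal.ofReal_lt_one.mpr
        (Real.rpow_lt_one_of_one_lt_of_neg hx1 (by linarith))
    have h := setLIntegral_strict_mono (f := f) (g := fun _ => (1 : ℝ≥0∞))
      (hBym.diff hB0m) hpos measurable_const hfinS1 hlt
    rwa [setLIntegral_one] at h
  -- lower bound on B0 \ By
  have hS0 : volume (B0 \ By) ≤ ∫⁻ x in B0 \ By, f x := by
    rw [← setLIntegral_one]
    refine lintegral_mono_ae ?_
    have hmem : ∀ᵐ x ∂(volume.restrict (B0 \ By)), x ∈ B0 \ By :=
      ae_restrict_mem (hB0m.diff hBym)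
    have h0 : volume ({0} : Set (EuclideanSpace ℝ (Fin n))) = 0 :=
      measure_singleton _
    have hne : ∀ᵐ x ∂(volume.restrict (B0 \ By)),
        x ≠ (0 : EuclideanSpace ℝ (Fin n)) :=
      ae_restrict_of_ae (by rw [ae_iff]; simp)
    filter_upwards [hmem, hne] with x hx hx0
    have hxn : 0 < ‖x‖ := norm_pos_iff.mpr hx0
    have hx1 : ‖x‖ ≤ 1 := by
      have h1 := hx.1
      simpa only [hB0def, Metric.mem_closedBall, dist_zero_right] using h1
    calc (1 : ℝ≥0∞) = ENNReal.ofReal 1 := ENNReal.ofReal_one.symm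
      _ ≤ f x := ENNReal.ofReal_le_ofReal
          (Real.one_le_rpow_of_pos_of_le_one_of_nonpos hxn hx1 (by linarith))
  -- combine
  have hAint : (∫⁻ x in By ∩ B0, f x) ≠ ⊤ := by
    refine ne_of_lt (lt_of_le_of_lt (lintegral_mono_set Set.inter_subset_right) ?_)
    exact lt_of_le_of_ne le_top hfin0
  have hstrict : (∫⁻ x in By, f x) < ∫⁻ x in B0, f x := by
    calc (∫⁻ x in By, f x)
        = (∫⁻ x in By ∩ B0, f x) + ∫⁻ x in By \ B0, f x :=
          (lintegral_inter_add_diff f By hB0m).symm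
      _ < (∫⁻ x in By ∩ B0, f x) + volume (By \ B0) :=
          ENNReal.add_lt_add_left hAint hS1
      _ = (∫⁻ x in By ∩ B0, f x) + volume (B0 \ By) := by rw [hdiffvol]
      _ ≤ (∫⁻ x in By ∩ B0, f x) + ∫⁻ x in B0 \ By, f x := by gcongr
      _ = (∫⁻ x in B0 ∩ By, f x) + ∫⁻ x in B0 \ By, f x := by rw [Set.inter_comm]
      _ = ∫⁻ x in B0, f x := lintegral_inter_add_diff f B0 hBym
  exact ⟨hstrict.le, ⟨fun h => absurd h hstrict.ne, fun h => absurd h hy⟩⟩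
end

section
/- Let β ∈ (0, 2) and let B ⊂ ℝ² be the closed unit disk. For y on the unit circle ∂B, ∫_{B + y} ‖x‖^{−β} dx < ∫_B ‖x‖^{−β} dx, and consequently ∫_{∂B} ( ∫_{B} ‖x − y‖^{−β} dx − ∫_B ‖x‖^{−β} dx ) dσ(y) < 0, where σ is the arc-length measure on the unit circle. -/
open MeasureTheory Metric Set Real
open scoped RealInnerProductSpace

set_option maxHeartbeats 1000000

local notation "E" => EuclideanSpace ℝ (Fin 2)

lemma aux_integrableOn {β : ℝ} (hβ0 : 0 < β) (hβ2 : β < 2) (R : ℝ) :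
    IntegrableOn (fun x : E => ‖x‖ ^ (-β)) (closedBall 0 R) := by
  set f : E → ℝ := fun x => ‖x‖ ^ (-β) with hfdef
  have hm : Measurable f := measurable_norm.pow_const (-β)
  have hnn : ∀ x, 0 ≤ f x := fun x => rpow_nonneg (norm_nonneg x) _
  refine ⟨hm.aestronglyMeasurable, ?_⟩
  rw [hasFiniteIntegral_iff_norm]
  have hsub : ∀ t : ℝ, 0 < t → {a : E | t < f a} ⊆ closedBall 0 (t ^ (-β⁻¹)) := by
    intro t ht a ha
    have hpos : 0 < ‖a‖ := by
      rcases (norm_nonneg a).eq_or_lt with h | h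
      · exfalso
        have : f a = 0 := by
          simp only [hfdef, ← h]
          exact Real.zero_rpow (neg_ne_zero.mpr hβ0.ne')
        simp only [mem_setOf_eq] at ha; linarith
      · exact h
    have h2 : (‖a‖ ^ (-β)) ^ (-β⁻¹) < t ^ (-β⁻¹) :=
      Real.rpow_lt_rpow_of_neg ht ha (by simp [inv_pos, hβ0])
    rw [← Real.rpow_mul (norm_nonneg a), neg_mul_neg, mul_inv_cancel₀ hβ0.ne',
      Real.rpow_one] at h2
    exact mem_closedBall_zero_iff.mpr h2.le
  calc (∫⁻ a in closedBall (0:E) R, ENNReal.ofReal ‖f a‖)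
      = ∫⁻ a in closedBall (0:E) R, ENNReal.ofReal (f a) := by
        congr 1; funext a; rw [Real.norm_eq_abs, abs_of_nonneg (hnn a)]
    _ = ∫⁻ t in Ioi (0:ℝ), volume.restrict (closedBall (0:E) R) {a | t < f a} :=
        lintegral_eq_lintegral_meas_lt _ (ae_of_all _ hnn) hm.aemeasurable
    _ = (∫⁻ t in Ioc (0:ℝ) 1, volume.restrict (closedBall (0:E) R) {a | t < f a}) +
        ∫⁻ t in Ioi (1:ℝ), volume.restrict (closedBall (0:E) R) {a | t < f a} := by
        rw [← lintegral_union measurableSet_Ioi (Ioc_disjoint_Ioi le_rfl),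
          Ioc_union_Ioi_eq_Ioi zero_le_one]
    _ < ⊤ := by
        apply ENNReal.add_lt_top.mpr
        constructor
        · calc (∫⁻ t in Ioc (0:ℝ) 1, volume.restrict (closedBall (0:E) R) {a | t < f a})
              ≤ ∫⁻ _ in Ioc (0:ℝ) 1, volume (closedBall (0:E) R) := by
                apply lintegral_mono
                intro t
                show (volume.restrict (closedBall (0:E) R)) {a | t < f a} ≤ _
                rw [show {a : E | t < f a} = f ⁻¹' Ioi t from rfl,
                  Measure.restrict_apply (hm measurableSet_Ioi)]
                exact measure_mono inter_subset_right
            _ < ⊤ := by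
                rw [setLIntegral_const]
                exact ENNReal.mul_lt_top measure_closedBall_lt_top (by simp)
        · have he : (-β⁻¹ * 2 : ℝ) < -1 := by
            have h21 : 1 < β⁻¹ * 2 := by
              rw [← div_eq_inv_mul]; exact (one_lt_div hβ0).2 hβ2
            nlinarith
          calc (∫⁻ t in Ioi (1:ℝ), volume.restrict (closedBall (0:E) R) {a | t < f a})
              ≤ ∫⁻ t in Ioi (1:ℝ),
                  ENNReal.ofReal (t ^ (-β⁻¹ * 2)) * volume (ball (0:E) 1) := by
                apply setLIntegral_mono' measurableSet_Ioi
                intro t ht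
                have ht0 : (0:ℝ) < t := lt_trans one_pos ht
                have : volume.restrict (closedBall (0:E) R) {a | t < f a} ≤
                    volume (closedBall (0:E) (t ^ (-β⁻¹))) := by
                  rw [show {a : E | t < f a} = f ⁻¹' Ioi t from rfl,
                    Measure.restrict_apply (hm measurableSet_Ioi)]
                  exact measure_mono ((inter_subset_left).trans (hsub t ht0))
                refine this.trans ?_
                rw [Measure.addHaar_closedBall volume (0:E) (rpow_nonneg ht0.le _)]
                apply le_of_eq
                congr 1
                rw [finrank_euclideanSpace_fin, ← Real.rpow_natCast (t ^ (-β⁻¹)) 2,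
                  ← Real.rpow_mul ht0.le]
                norm_num
            _ = (∫⁻ t in Ioi (1:ℝ), ENNReal.ofReal (t ^ (-β⁻¹ * 2))) *
                  volume (ball (0:E) 1) := by
                rw [lintegral_mul_const _ (by measurability)]
            _ < ⊤ := by
                apply ENNReal.mul_lt_top _ measure_ball_lt_top
                have hInt : IntegrableOn (fun t : ℝ => t ^ (-β⁻¹ * 2)) (Ioi 1) :=
                  integrableOn_Ioi_rpow_of_lt he one_pos
                have h2 := hInt.2
                rw [hasFiniteIntegral_iff_norm] at h2
                refine lt_of_le_of_lt (lintegral_mono fun t => ?_) h2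
                exact ENNReal.ofReal_le_ofReal (by rw [Real.norm_eq_abs]; exact le_abs_self _)

lemma aux_iso_emb (e : E ≃ₗᵢ[ℝ] E) : MeasurableEmbedding (e : E → E) :=
  e.toMeasurableEquiv.measurableEmbedding

lemma aux_integral_comp_iso (e : E ≃ₗᵢ[ℝ] E) (g : E → ℝ) (s : Set E) :
    ∫ x in e ⁻¹' s, g (e x) = ∫ x in s, g x :=
  e.measurePreserving.setIntegral_preimage_emb (aux_iso_emb e) g s

lemma aux_core {β : ℝ} (hβ0 : 0 < β) (hβ2 : β < 2) (y : E) (hy : ‖y‖ = 1) :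
    (∫ x in closedBall (0:E) 1, ‖x - y‖ ^ (-β)) < ∫ x in closedBall (0:E) 1, ‖x‖ ^ (-β) := by
  have hyy : ⟪y, y⟫ = 1 := by rw [real_inner_self_eq_norm_sq, hy]; norm_num
  set f : E → ℝ := fun x => ‖x‖ ^ (-β) with hfdef
  set g : E → ℝ := fun u => ‖u‖ ^ (-β) - ‖u - y‖ ^ (-β) with hgdef
  set B : Set E := closedBall 0 1 with hBdef
  -- integrability
  have hIf : IntegrableOn f B := aux_integrableOn hβ0 hβ2 1
  have hIfy : IntegrableOn (fun u : E => ‖u - y‖ ^ (-β)) B := by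
    have h2 : IntegrableOn f (closedBall (-y) 1) :=
      (aux_integrableOn hβ0 hβ2 2).mono_set
        (closedBall_subset_closedBall' (by rw [dist_zero_right, norm_neg, hy]; norm_num))
    have h3 := ((measurePreserving_add_right volume (-y)).integrableOn_comp_preimage
      (Homeomorph.addRight (-y)).measurableEmbedding).2 h2
    have hset : (· + (-y)) ⁻¹' closedBall (-y) 1 = B := by
      ext u
      simp [hBdef, mem_closedBall, dist_eq_norm, add_sub_cancel_right]
    rw [hset] at h3
    refine h3.congr_fun (fun u _ => ?_) measurableSet_closedBall
    simp [f, Function.comp, sub_eq_add_neg]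
  have hIg : IntegrableOn g B := hIf.sub hIfy
  -- sets
  set Sm : Set E := B ∩ {u | ⟪u, y⟫ ≤ 1/2} with hSmdef
  set Sp : Set E := B ∩ {u | 1/2 < ⟪u, y⟫} with hSpdef
  set T : Set E := closedBall y 1 ∩ {u | ⟪u, y⟫ < 1/2} with hTdef
  have hcont : Continuous fun u : E => ⟪u, y⟫ := continuous_id.inner continuous_const
  have hSm_meas : MeasurableSet Sm :=
    measurableSet_closedBall.inter (hcont.measurable measurableSet_Iic)
  have hSp_meas : MeasurableSet Sp :=
    measurableSet_closedBall.inter (hcont.measurable measurableSet_Ioi)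
  have hT_meas : MeasurableSet T :=
    measurableSet_closedBall.inter (hcont.measurable measurableSet_Iio)
  have hTSm : T ⊆ Sm := by
    rintro u ⟨hu1, hu2⟩
    have h1 : ‖u - y‖ ≤ 1 := mem_closedBall_iff_norm.mp hu1
    have h2 : ‖u - y‖^2 = ‖u‖^2 - 2 * ⟪u, y⟫ + ‖y‖^2 := norm_sub_sq_real u y
    have hu2' : ⟪u, y⟫ < 1/2 := hu2
    have h3 : ‖u‖^2 ≤ 1 := by
      have : ‖u - y‖^2 ≤ 1 := by nlinarith [norm_nonneg (u - y)]
      rw [hy] at h2; nlinarith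
    refine ⟨?_, hu2'.le⟩
    rw [hBdef, mem_closedBall_zero_iff]
    nlinarith [norm_nonneg u]
  -- reflection
  set e₀ : E ≃ₗᵢ[ℝ] E := Submodule.reflection (ℝ ∙ y)ᗮ with he₀def
  have he₀y : e₀ y = -y := Submodule.reflection_orthogonalComplement_singleton_eq_neg y
  have he₀inner : ∀ u, ⟪e₀ u, y⟫ = -⟪u, y⟫ := by
    intro u
    have : ⟪e₀ u, e₀ y⟫ = ⟪u, y⟫ := e₀.inner_map_map u y
    rw [he₀y, inner_neg_right] at this
    linarith
  set ψ : E → E := fun u => e₀ u + y with hψdef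
  have hψ_mp : MeasurePreserving ψ volume volume :=
    (measurePreserving_add_right volume y).comp e₀.measurePreserving
  have hψ_emb : MeasurableEmbedding ψ :=
    (Homeomorph.addRight y).measurableEmbedding.comp (aux_iso_emb e₀)
  have hψnorm : ∀ u, ‖ψ u‖ = ‖u - y‖ := by
    intro u
    have : ψ u = e₀ (u - y) := by rw [hψdef]; simp [map_sub, he₀y]
    rw [this, e₀.norm_map]
  have hψnorm' : ∀ u, ‖ψ u - y‖ = ‖u‖ := by
    intro u; rw [hψdef]; simp [add_sub_cancel_right, e₀.norm_map]
  have hψinner : ∀ u, ⟪ψ u, y⟫ = 1 - ⟪u, y⟫ := by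
    intro u
    rw [hψdef]
    simp only [inner_add_left, he₀inner u, hyy]
    ring
  have hpre : ψ ⁻¹' T = Sp := by
    ext u
    simp only [mem_preimage, hTdef, hSpdef, mem_inter_iff, mem_setOf_eq,
      mem_closedBall_iff_norm, hψnorm' u, hψinner u, hBdef, mem_closedBall_zero_iff, sub_zero]
    constructor
    · rintro ⟨h1, h2⟩; exact ⟨h1, by linarith⟩
    · rintro ⟨h1, h2⟩; exact ⟨h1, by linarith⟩
  have hgψ : ∀ u, g (ψ u) = -g u := by
    intro u
    rw [hgdef]
    simp only [hψnorm u, hψnorm' u]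
    ring
  -- splitting
  have hBsplit : B = Sm ∪ Sp := by
    ext u
    simp only [hSmdef, hSpdef, mem_union, mem_inter_iff, mem_setOf_eq]
    constructor
    · intro hu; rcases le_or_gt (⟪u, y⟫) (1/2) with h | h
      · exact Or.inl ⟨hu, h⟩
      · exact Or.inr ⟨hu, h⟩
    · rintro (⟨hu, -⟩ | ⟨hu, -⟩) <;> exact hu
  have hdisj : Disjoint Sm Sp := by
    rw [disjoint_left]
    rintro u ⟨-, h1⟩ ⟨-, h2⟩
    simp only [mem_setOf_eq] at h1 h2
    linarith
  have hsplit : ∫ u in B, g u = (∫ u in Sm, g u) + ∫ u in Sp, g u := by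
    rw [hBsplit]
    exact setIntegral_union hdisj hSp_meas (hIg.mono_set (hBsplit ▸ subset_union_left))
      (hIg.mono_set (hBsplit ▸ subset_union_right))
  have hT_int : ∫ u in T, g u = - ∫ u in Sp, g u := by
    have h2 : ∫ u in ψ ⁻¹' T, g (ψ u) = ∫ u in T, g u :=
      hψ_mp.setIntegral_preimage_emb hψ_emb g T
    rw [hpre] at h2
    rw [← h2]
    have : (fun u => g (ψ u)) = fun u => -g u := funext hgψ
    rw [this, integral_neg]
  have hSm_split : ∫ u in Sm, g u = (∫ u in T, g u) + ∫ u in Sm \ T, g u := by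
    rw [← setIntegral_union disjoint_sdiff_self_right (hSm_meas.diff hT_meas)
      (hIg.mono_set (hTSm.trans inter_subset_left))
      (hIg.mono_set ((diff_subset.trans inter_subset_left))), union_diff_cancel hTSm]
  have hkey : ∫ u in B, g u = ∫ u in Sm \ T, g u := by
    rw [hsplit, hSm_split, hT_int]; ring
  -- nonnegativity a.e.
  have hae : 0 ≤ᵐ[volume.restrict (Sm \ T)] g := by
    have h1 : ∀ᵐ u : E ∂volume, u ≠ 0 := by
      rw [ae_iff]
      have : {u : E | ¬u ≠ 0} = {0} := by ext u; simp
      rw [this]; exact measure_singleton 0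
    filter_upwards [ae_restrict_of_ae h1, ae_restrict_mem (hSm_meas.diff hT_meas)]
      with u hu hmem
    have ht : ⟪u, y⟫ ≤ 1/2 := hmem.1.2
    have h2 : ‖u - y‖^2 = ‖u‖^2 - 2 * ⟪u, y⟫ + ‖y‖^2 := norm_sub_sq_real u y
    rw [hy] at h2
    have h3 : ‖u‖ ≤ ‖u - y‖ := by
      have h4 : ‖u‖^2 ≤ ‖u - y‖^2 := by nlinarith
      nlinarith [norm_nonneg u, norm_nonneg (u - y)]
    have h5 : 0 < ‖u‖ := norm_pos_iff.mpr hu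
    exact sub_nonneg.mpr (Real.rpow_le_rpow_of_nonpos h5 h3 (neg_nonpos.mpr hβ0.le))
  -- the small ball
  set c : E := (-(1/2) : ℝ) • y with hcdef
  set D : Set E := closedBall c (1/8) with hDdef
  have hnc : ‖c‖ = 1/2 := by rw [hcdef, norm_smul, hy]; norm_num
  have hcy : ‖c - y‖ = 3/2 := by
    have : c - y = (-(3/2) : ℝ) • y := by
      rw [hcdef]
      rw [show y = (1:ℝ) • y by simp, smul_smul, ← sub_smul]
      norm_num
    rw [this, norm_smul, hy]; norm_num
  have hDsub : D ⊆ Sm \ T := by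
    intro u hu
    have hu8 : ‖u - c‖ ≤ 1/8 := mem_closedBall_iff_norm.mp hu
    have hun : ‖u‖ ≤ 5/8 := by
      calc ‖u‖ = ‖(u - c) + c‖ := by rw [sub_add_cancel]
        _ ≤ ‖u - c‖ + ‖c‖ := norm_add_le _ _
        _ ≤ 5/8 := by rw [hnc]; linarith
    have hin : ⟪u, y⟫ ≤ -1/4 := by
      have h1 : ⟪u, y⟫ = ⟪u - c, y⟫ + ⟪c, y⟫ := by rw [inner_sub_left]; ring
      have h2 : ⟪c, y⟫ = -(1/2) := by rw [hcdef, real_inner_smul_left, hyy]; ring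
      have h3 : |⟪u - c, y⟫| ≤ ‖u - c‖ * ‖y‖ := abs_real_inner_le_norm _ _
      rw [hy, mul_one] at h3
      have := abs_le.mp h3
      rw [h1, h2]; linarith
    have huy : 11/8 ≤ ‖u - y‖ := by
      have : ‖c - y‖ ≤ ‖c - u‖ + ‖u - y‖ := by
        calc ‖c - y‖ = ‖(c - u) + (u - y)‖ := by abel_nf
          _ ≤ ‖c - u‖ + ‖u - y‖ := norm_add_le _ _
      rw [hcy, norm_sub_rev c u] at this
      linarith
    refine ⟨⟨?_, by simp only [mem_setOf_eq]; linarith⟩, ?_⟩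
    · rw [hBdef, mem_closedBall_zero_iff]; linarith
    · rintro ⟨hmem, -⟩
      have := mem_closedBall_iff_norm.mp hmem
      linarith
  set c₀ : ℝ := (5/8 : ℝ) ^ (-β) - (11/8 : ℝ) ^ (-β) with hc₀def
  have hc₀pos : 0 < c₀ :=
    sub_pos.mpr (Real.rpow_lt_rpow_of_neg (by norm_num) (by norm_num)
      (neg_lt_zero.mpr hβ0))
  have hDlow : ∀ u ∈ D, c₀ ≤ g u := by
    intro u hu
    have hu8 : ‖u - c‖ ≤ 1/8 := mem_closedBall_iff_norm.mp hu
    have hun : ‖u‖ ≤ 5/8 := by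
      calc ‖u‖ = ‖(u - c) + c‖ := by rw [sub_add_cancel]
        _ ≤ ‖u - c‖ + ‖c‖ := norm_add_le _ _
        _ ≤ 5/8 := by rw [hnc]; linarith
    have hupos : 0 < ‖u‖ := by
      have : ‖c‖ ≤ ‖c - u‖ + ‖u‖ := by
        calc ‖c‖ = ‖(c - u) + u‖ := by rw [sub_add_cancel]
          _ ≤ ‖c - u‖ + ‖u‖ := norm_add_le _ _
      rw [hnc, norm_sub_rev c u] at this
      linarith
    have huy : 11/8 ≤ ‖u - y‖ := by
      have : ‖c - y‖ ≤ ‖c - u‖ + ‖u - y‖ := by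
        calc ‖c - y‖ = ‖(c - u) + (u - y)‖ := by abel_nf
          _ ≤ ‖c - u‖ + ‖u - y‖ := norm_add_le _ _
      rw [hcy, norm_sub_rev c u] at this
      linarith
    have h1 : (5/8 : ℝ) ^ (-β) ≤ ‖u‖ ^ (-β) :=
      Real.rpow_le_rpow_of_nonpos hupos hun (neg_nonpos.mpr hβ0.le)
    have h2 : ‖u - y‖ ^ (-β) ≤ (11/8 : ℝ) ^ (-β) :=
      Real.rpow_le_rpow_of_nonpos (by norm_num) huy (neg_nonpos.mpr hβ0.le)
    have hgu : g u = ‖u‖ ^ (-β) - ‖u - y‖ ^ (-β) := rfl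
    rw [hgu, hc₀def]
    linarith
  have hIgD : IntegrableOn g D := hIg.mono_set (hDsub.trans (diff_subset.trans inter_subset_left))
  have hDpos : 0 < ∫ u in D, g u := by
    have h1 := setIntegral_ge_of_const_le (s := D) (hDdef ▸ measurableSet_closedBall)
      (hDdef ▸ measure_closedBall_lt_top.ne) hDlow hIgD
    have h2 : 0 < (volume D).toReal :=
      ENNReal.toReal_pos (measure_closedBall_pos volume c (by norm_num)).ne'
        measure_closedBall_lt_top.ne
    calc (0:ℝ) < c₀ * (volume D).toReal := mul_pos hc₀pos h2
      _ ≤ ∫ u in D, g u := by rw [smul_eq_mul, mul_comm] at h1; exact h1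
  have hfinal : 0 < ∫ u in B, g u := by
    rw [hkey]
    calc (0:ℝ) < ∫ u in D, g u := hDpos
      _ ≤ ∫ u in Sm \ T, g u :=
        setIntegral_mono_set (hIg.mono_set (diff_subset.trans inter_subset_left)) hae
          (HasSubset.Subset.eventuallyLE hDsub)
  have := integral_sub (hIf.congr_fun (fun u _ => rfl) measurableSet_closedBall) hIfy
  rw [integral_sub hIf hIfy] at hfinal
  linarith


lemma aux_bridge (β : ℝ) (y : E) (hy : ‖y‖ = 1) :
    (∫ x in closedBall y 1, ‖x‖ ^ (-β)) = ∫ x in closedBall (0:E) 1, ‖x - y‖ ^ (-β) := by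
  have h1 : (∫ x in (· + y) ⁻¹' (closedBall y 1), ‖x + y‖ ^ (-β))
      = ∫ x in closedBall y 1, ‖x‖ ^ (-β) :=
    (measurePreserving_add_right volume y).setIntegral_preimage_emb
      (Homeomorph.addRight y).measurableEmbedding (fun x => ‖x‖ ^ (-β)) _
  have hset : (· + y) ⁻¹' (closedBall y 1) = closedBall (0:E) 1 := by
    ext u
    simp [mem_closedBall, dist_eq_norm, add_sub_cancel_right]
  rw [hset] at h1
  set e₀ : E ≃ₗᵢ[ℝ] E := Submodule.reflection (ℝ ∙ y)ᗮ with he₀def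
  have he₀y : e₀ y = -y := Submodule.reflection_orthogonalComplement_singleton_eq_neg y
  have h2 : (∫ x in e₀ ⁻¹' (closedBall (0:E) 1), ‖e₀ x + y‖ ^ (-β))
      = ∫ x in closedBall (0:E) 1, ‖x + y‖ ^ (-β) :=
    aux_integral_comp_iso e₀ (fun x => ‖x + y‖ ^ (-β)) _
  have hset2 : e₀ ⁻¹' (closedBall (0:E) 1) = closedBall (0:E) 1 := by
    ext u
    simp [mem_closedBall_zero_iff, e₀.norm_map]
  rw [hset2] at h2
  have h3 : ∀ x : E, ‖e₀ x + y‖ = ‖x - y‖ := by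
    intro x
    have : e₀ x + y = e₀ (x - y) := by simp [map_sub, he₀y]
    rw [this, e₀.norm_map]
  rw [← h1, ← h2]
  congr 1
  funext x
  rw [h3 x]

lemma aux_const (β : ℝ) (y z : E) (hy : ‖y‖ = 1) (hz : ‖z‖ = 1) :
    (∫ x in closedBall (0:E) 1, ‖x - y‖ ^ (-β)) =
      ∫ x in closedBall (0:E) 1, ‖x - z‖ ^ (-β) := by
  set e : E ≃ₗᵢ[ℝ] E := Submodule.reflection (ℝ ∙ (z - y))ᗮ with hedef
  have hez : e z = y := Submodule.reflection_sub (hz.trans hy.symm)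
  have h2 : (∫ x in e ⁻¹' (closedBall (0:E) 1), ‖e x - y‖ ^ (-β))
      = ∫ x in closedBall (0:E) 1, ‖x - y‖ ^ (-β) :=
    aux_integral_comp_iso e (fun x => ‖x - y‖ ^ (-β)) _
  have hset2 : e ⁻¹' (closedBall (0:E) 1) = closedBall (0:E) 1 := by
    ext u
    simp [mem_closedBall_zero_iff, e.norm_map]
  rw [hset2] at h2
  rw [← h2]
  congr 1
  funext x
  have : e x - y = e (x - z) := by simp [map_sub, hez]
  rw [this, e.norm_map]

/-- For `β ∈ (0, 2)` and the closed unit disk `B ⊂ ℝ²`: for every `y` on the unit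
circle, `∫_{B+y} ‖x‖^{−β} dx < ∫_B ‖x‖^{−β} dx`, and consequently the integral over
the unit circle (with respect to arc-length/surface measure) of
`∫_B ‖x − y‖^{−β} dx − ∫_B ‖x‖^{−β} dx` is negative. -/
theorem disk_boundary_average_negative (β : ℝ) (hβ : β ∈ Set.Ioo (0 : ℝ) 2) :
    (∀ y : EuclideanSpace ℝ (Fin 2), ‖y‖ = 1 →
      (∫ x in Metric.closedBall y 1, ‖x‖ ^ (-β)) <
        ∫ x in Metric.closedBall (0 : EuclideanSpace ℝ (Fin 2)) 1, ‖x‖ ^ (-β)) ∧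
    (∫ y : Metric.sphere (0 : EuclideanSpace ℝ (Fin 2)) 1,
        ((∫ x in Metric.closedBall (0 : EuclideanSpace ℝ (Fin 2)) 1,
            ‖x - (y : EuclideanSpace ℝ (Fin 2))‖ ^ (-β)) -
          ∫ x in Metric.closedBall (0 : EuclideanSpace ℝ (Fin 2)) 1, ‖x‖ ^ (-β))
        ∂((volume : Measure (EuclideanSpace ℝ (Fin 2))).toSphere)) < 0 := by
  obtain ⟨hβ0, hβ2⟩ := hβ
  constructor
  · intro y hy
    rw [aux_bridge β y hy]
    exact aux_core hβ0 hβ2 y hy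
  · set y₀ : E := EuclideanSpace.single (0 : Fin 2) (1:ℝ) with hy₀def
    have hy₀ : ‖y₀‖ = 1 := by
      rw [hy₀def, EuclideanSpace.norm_single]; norm_num
    set C : ℝ := ∫ x in closedBall (0:E) 1, ‖x‖ ^ (-β) with hCdef
    set I₀ : ℝ := ∫ x in closedBall (0:E) 1, ‖x - y₀‖ ^ (-β) with hI₀def
    have hconst : (fun y : Metric.sphere (0:E) 1 =>
        (∫ x in closedBall (0:E) 1, ‖x - (y:E)‖ ^ (-β)) - C) = fun _ => I₀ - C := by
      funext y
      have hyn : ‖(y : E)‖ = 1 := by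
        have := y.2
        rwa [mem_sphere_iff_norm, sub_zero] at this
      rw [aux_const β (y : E) y₀ hyn hy₀]
    rw [hconst, integral_const, smul_eq_mul]
    have hI₀C : I₀ - C < 0 := sub_neg.mpr (aux_core hβ0 hβ2 y₀ hy₀)
    have hμpos : 0 < ((volume : Measure E).toSphere univ).toReal := by
      refine ENNReal.toReal_pos ?_ (measure_ne_top _ _)
      rw [Measure.toSphere_apply_univ]
      exact (ENNReal.mul_pos (by simp [finrank_euclideanSpace_fin])
        (measure_ball_pos volume 0 one_pos).ne').ne'
    exact mul_neg_of_pos_of_neg hμpos hI₀C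
end
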